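/- arXiv:2501.12027 — 5 statements merged into one kernel-verified Lean document; each statement's English description precedes it below -/
import Mathlib

section
/- Let n be a positive integer and let u, η be real numbers satisfying u² - η² = (2/((n+1)(n+2)))(u^{n+2} - η^{n+2}), with u ≠ η and u ≠ -η. Then (Σ_{k=1}^{n} k u^{n-k} η^{k-1})(u^{n+1}/(n+1) - u) + (Σ_{k=1}^{n} k η^{n-k} u^{k-1})(η^{n+1}/(n+1) - η) = (n/((n+1)(n+2))) Σ_{k=0}^{⌊(n-1)/2⌋} (u^{n-2k} - η^{n-2k})² (uη)^{2k}. -/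
/-!
After multiplication by `(u - η)² (u + η)` every sum in the identity has a closed form: the
weighted sum `∑ k x^(n-k) y^(k-1)` is the `y`-derivative of the geometric sum
`∑ x^(n-k) y^k`, and the sum of squares telescopes in steps of two to the geometric sum in
`x², y²`. The identity then becomes a polynomial identity in `u, η, uⁿ, ηⁿ` whose two sides
differ by a multiple of the constraint `W(u) = W(η)`.
-/

open Finset

section CommRing

variable {R : Type*} [CommRing R]

theorem sum_Icc_mul_pow_mul_pow_succ (x y : R) (m : ℕ) :
    ∑ k ∈ Icc 1 (m + 1), (k : R) * x ^ (m + 1 - k) * y ^ (k - 1) =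
      x * ∑ k ∈ Icc 1 m, (k : R) * x ^ (m - k) * y ^ (k - 1) + (m + 1) * y ^ m := by
  rw [sum_Icc_succ_top (by omega), mul_sum]
  congr 1
  · refine sum_congr rfl fun k hk => ?_
    rw [show m + 1 - k = m - k + 1 by grind, pow_succ]
    ring
  · push_cast
    simp

theorem sum_Icc_mul_pow_mul_pow_mul_sub_sq (x y : R) (m : ℕ) :
    (∑ k ∈ Icc 1 m, (k : R) * x ^ (m - k) * y ^ (k - 1)) * (x - y) ^ 2 =
      x ^ (m + 1) - y ^ (m + 1) - (m + 1) * y ^ m * (x - y) := by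
  induction m with
  | zero => simp
  | succ m ih =>
    rw [sum_Icc_mul_pow_mul_pow_succ]
    push_cast
    linear_combination x * ih

theorem sum_range_sq_sub_pow_mul_pow_add_three (x y : R) (n : ℕ) :
    ∑ k ∈ range ((n + 3 - 1) / 2 + 1),
        (x ^ (n + 3 - 2 * k) - y ^ (n + 3 - 2 * k)) ^ 2 * (x * y) ^ (2 * k) =
      (x ^ (n + 3) - y ^ (n + 3)) ^ 2 + (x * y) ^ 2 * ∑ k ∈ range ((n + 1 - 1) / 2 + 1),
        (x ^ (n + 1 - 2 * k) - y ^ (n + 1 - 2 * k)) ^ 2 * (x * y) ^ (2 * k) := by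
  rw [show (n + 3 - 1) / 2 + 1 = (n + 1 - 1) / 2 + 1 + 1 by omega, sum_range_succ', mul_sum,
    add_comm]
  congr 1
  · simp
  · refine sum_congr rfl fun k _ => ?_
    rw [show n + 3 - 2 * (k + 1) = n + 1 - 2 * k by omega, mul_add, pow_add]
    ring

theorem sum_range_sq_sub_pow_mul_pow_mul_sq_sub_sq (x y : R) (n : ℕ) :
    (∑ k ∈ range ((n - 1) / 2 + 1),
        (x ^ (n - 2 * k) - y ^ (n - 2 * k)) ^ 2 * (x * y) ^ (2 * k)) * (x ^ 2 - y ^ 2) =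
      x ^ (2 * n + 2) - y ^ (2 * n + 2) - (n + 1) * (x * y) ^ n * (x ^ 2 - y ^ 2) := by
  -- at `n = 0` the truncated `(n - 1) / 2` leaves one term, `k = 0`, and it vanishes
  rcases n with _ | m
  · simp
  induction m using Nat.twoStepInduction with
  | zero =>
    simp only [zero_add, tsub_self, Nat.zero_div, range_one, sum_singleton, mul_zero, tsub_zero,
      pow_one, pow_zero, mul_one, Nat.reduceAdd, Nat.cast_one]
    ring
  | one =>
    simp only [Nat.reduceAdd, Nat.add_one_sub_one, Nat.reduceDiv, zero_add, range_one,
      sum_singleton, mul_zero, tsub_zero, pow_zero, mul_one, Nat.reduceMul, Nat.cast_ofNat]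
    ring
  | more m ih _ =>
    rw [sum_range_sq_sub_pow_mul_pow_add_three]
    push_cast at ih ⊢
    linear_combination (x * y) ^ 2 * ih

end CommRing

theorem abelian_identity_general (n : ℕ) (u η : ℝ)
    (hcon : u ^ 2 - η ^ 2 =
      (2 / (((n : ℝ) + 1) * ((n : ℝ) + 2))) * (u ^ (n + 2) - η ^ (n + 2)))
    (hne : u ≠ η) (hne' : u ≠ -η) :
    (∑ k ∈ Finset.Icc 1 n, (k : ℝ) * u ^ (n - k) * η ^ (k - 1)) *
        (u ^ (n + 1) / ((n : ℝ) + 1) - u) +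
      (∑ k ∈ Finset.Icc 1 n, (k : ℝ) * η ^ (n - k) * u ^ (k - 1)) *
        (η ^ (n + 1) / ((n : ℝ) + 1) - η) =
      ((n : ℝ) / (((n : ℝ) + 1) * ((n : ℝ) + 2))) *
        ∑ k ∈ Finset.range ((n - 1) / 2 + 1),
          (u ^ (n - 2 * k) - η ^ (n - 2 * k)) ^ 2 * (u * η) ^ (2 * k) := by
  have hd : u - η ≠ 0 := sub_ne_zero.mpr hne
  have hs : u + η ≠ 0 := fun h => hne' (eq_neg_of_add_eq_zero_left h)
  have hA := sum_Icc_mul_pow_mul_pow_mul_sub_sq u η n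
  have hB := sum_Icc_mul_pow_mul_pow_mul_sub_sq η u n
  have hS := sum_range_sq_sub_pow_mul_pow_mul_sq_sub_sq u η n
  field_simp at hcon
  set A := ∑ k ∈ Icc 1 n, (k : ℝ) * u ^ (n - k) * η ^ (k - 1)
  set B := ∑ k ∈ Icc 1 n, (k : ℝ) * η ^ (n - k) * u ^ (k - 1)
  set S := ∑ k ∈ range ((n - 1) / 2 + 1),
    (u ^ (n - 2 * k) - η ^ (n - 2 * k)) ^ 2 * (u * η) ^ (2 * k)
  set N : ℝ := (n : ℝ)
  have hcleared :
      (N + 2) * (A * (u ^ (n + 1) - (N + 1) * u) + B * (η ^ (n + 1) - (N + 1) * η)) = N * S := by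
    refine mul_right_cancel₀ (by positivity : (u - η) ^ 2 * (u + η) ≠ 0) ?_
    linear_combination (N + 2) * (u + η) * (u ^ (n + 1) - (N + 1) * u) * hA
      + (N + 2) * (u + η) * (η ^ (n + 1) - (N + 1) * η) * hB - N * (u - η) * hS
      + ((N + 1) * (η ^ n * u - u ^ n * η) - (u ^ (n + 1) - η ^ (n + 1))) * hcon
  have hN1 : N + 1 ≠ 0 := by positivity
  have hN2 : N + 2 ≠ 0 := by positivity
  field_simp
  linear_combination hcleared

/-- The algebraic identity of Lemma 4.1: if
`u² - η² = (2/((n+1)(n+2)))(u^(n+2) - η^(n+2))` with `u ≠ η`, `u ≠ -η`, then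
`(∑_{k=1}^n k u^(n-k) η^(k-1))(u^(n+1)/(n+1) - u)
  + (∑_{k=1}^n k η^(n-k) u^(k-1))(η^(n+1)/(n+1) - η)
  = (n/((n+1)(n+2))) ∑_{k=0}^{⌊(n-1)/2⌋} (u^(n-2k) - η^(n-2k))² (uη)^(2k)`. -/
theorem abelian_identity (n : ℕ) (hn : 0 < n) (u η : ℝ)
    (hcon : u ^ 2 - η ^ 2 =
      (2 / (((n : ℝ) + 1) * ((n : ℝ) + 2))) * (u ^ (n + 2) - η ^ (n + 2)))
    (hne : u ≠ η) (hne' : u ≠ -η) :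
    (∑ k ∈ Finset.Icc 1 n, (k : ℝ) * u ^ (n - k) * η ^ (k - 1)) *
        (u ^ (n + 1) / ((n : ℝ) + 1) - u) +
      (∑ k ∈ Finset.Icc 1 n, (k : ℝ) * η ^ (n - k) * u ^ (k - 1)) *
        (η ^ (n + 1) / ((n : ℝ) + 1) - η) =
      ((n : ℝ) / (((n : ℝ) + 1) * ((n : ℝ) + 2))) *
        ∑ k ∈ Finset.range ((n - 1) / 2 + 1),
          (u ^ (n - 2 * k) - η ^ (n - 2 * k)) ^ 2 * (u * η) ^ (2 * k) :=
  abelian_identity_general n u η hcon hne hne'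
end

section
/- Let n be a positive integer and let u, η be real numbers with u > 0 > η, u ≠ -η, satisfying u² - η² = (2/((n+1)(n+2)))(u^{n+2} - η^{n+2}). Then (Σ_{k=1}^{n} k u^{n-k} η^{k-1})(u - u^{n+1}/(n+1)) + (Σ_{k=1}^{n} k η^{n-k} u^{k-1})(η - η^{n+1}/(n+1)) < 0. -/
/-! With `p = x ^ n`, `q = y ^ n` and `S x y = ∑ k x^(n-k) y^(k-1)` (the `y`-derivative of the
complete homogeneous polynomial of degree `n`), multiplying by `(x - y)^2` expresses `S` through
`p` and `q` alone, and the constraint then collapses the left-hand side to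
`n ((n+1) (xy)^n - G) / ((n+1)(n+2))` with `G = ∑_{i ≤ n} x^(2i) y^(2(n-i))`.
Writing `G = ∑ aᵢ²` with `aᵢ a_{n-i} = (xy)^n` gives `2 (G - (n+1)(xy)^n) = ∑ (aᵢ - a_{n-i})²`,
which is positive because `a₀ = y^n ≠ x^n = aₙ`. -/

open Finset

section CommRing

variable {R : Type*} [CommRing R]

def weightedGeomSum₂ (x y : R) (n : ℕ) : R :=
  ∑ k ∈ Icc 1 n, (k : R) * x ^ (n - k) * y ^ (k - 1)

theorem weightedGeomSum₂_succ (x y : R) (n : ℕ) :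
    weightedGeomSum₂ x y (n + 1) = x * weightedGeomSum₂ x y n + (n + 1) * y ^ n := by
  rw [weightedGeomSum₂, sum_Icc_succ_top (by omega), weightedGeomSum₂, mul_sum]
  congr 1
  · refine sum_congr rfl fun k hk => ?_
    rw [show n + 1 - k = n - k + 1 by grind, pow_succ]
    ring
  · push_cast
    simp

theorem sub_sq_mul_weightedGeomSum₂ (x y : R) (n : ℕ) :
    (x - y) ^ 2 * weightedGeomSum₂ x y n = x * (x ^ n - y ^ n) - n * y ^ n * (x - y) := by
  induction n with
  | zero => simp [weightedGeomSum₂]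
  | succ n ih =>
    rw [weightedGeomSum₂_succ]
    push_cast
    linear_combination x * ih

end CommRing

section Order

variable {R : Type*} [CommRing R] [LinearOrder R] [IsStrictOrderedRing R]

theorem sum_mul_reflect_lt_sum_sq (a : ℕ → R) {n : ℕ} (h : a 0 ≠ a n) :
    ∑ i ∈ range (n + 1), a i * a (n - i) < ∑ i ∈ range (n + 1), a i ^ 2 := by
  have hreflect : ∑ i ∈ range (n + 1), a (n - i) ^ 2 = ∑ i ∈ range (n + 1), a i ^ 2 := by
    simpa using sum_range_reflect (fun i => a i ^ 2) (n + 1)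
  have hsq : ∑ i ∈ range (n + 1), (a i - a (n - i)) ^ 2
      = 2 * (∑ i ∈ range (n + 1), a i ^ 2 - ∑ i ∈ range (n + 1), a i * a (n - i)) := by
    calc ∑ i ∈ range (n + 1), (a i - a (n - i)) ^ 2
        = ∑ i ∈ range (n + 1), (a i ^ 2 + a (n - i) ^ 2 - 2 * (a i * a (n - i))) :=
          sum_congr rfl fun _ _ => by ring
      _ = _ := by rw [sum_sub_distrib, sum_add_distrib, hreflect, ← mul_sum]; ring
  have hpos : 0 < ∑ i ∈ range (n + 1), (a i - a (n - i)) ^ 2 :=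
    calc 0 < (a 0 - a (n - 0)) ^ 2 := by simpa using sq_pos_of_ne_zero (sub_ne_zero.mpr h)
      _ ≤ _ := single_le_sum (f := fun i => (a i - a (n - i)) ^ 2)
          (fun _ _ => sq_nonneg _) (mem_range.mpr n.succ_pos)
  linarith

theorem mul_pow_lt_geom_sum₂_sq {x y : R} {n : ℕ} (h : x ^ n ≠ y ^ n) :
    (n + 1) * (x * y) ^ n < ∑ i ∈ range (n + 1), (x ^ 2) ^ i * (y ^ 2) ^ (n - i) := by
  have := sum_mul_reflect_lt_sum_sq (fun i => x ^ i * y ^ (n - i)) (n := n) (by simpa using h.symm)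
  convert this using 1
  · rw [sum_congr rfl fun i hi => ?_, sum_const, card_range, nsmul_eq_mul]
    · push_cast; rfl
    · obtain ⟨k, rfl⟩ := Nat.exists_eq_add_of_le (mem_range_succ_iff.mp hi)
      simp only [Nat.add_sub_cancel_left, Nat.add_sub_cancel]
      ring
  · refine sum_congr rfl fun i _ => ?_
    ring

end Order

section Domain

variable {R : Type*} [CommRing R] [IsDomain R] {x y : R} {n : ℕ}

theorem two_mul_weightedGeomSum₂_combination (hxy : x ≠ y)
    (hcon : ((n : R) + 1) * (n + 2) * (x ^ 2 - y ^ 2) = 2 * (x ^ (n + 2) - y ^ (n + 2))) :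
    2 * (weightedGeomSum₂ x y n * ((n + 1) * x - x ^ (n + 1))
        + weightedGeomSum₂ y x n * ((n + 1) * y - y ^ (n + 1)))
      = n * (2 * (x * y) ^ n - (n + 1) * (x ^ n + y ^ n)) := by
  have hSxy := sub_sq_mul_weightedGeomSum₂ x y n
  have hSyx := sub_sq_mul_weightedGeomSum₂ y x n
  refine mul_left_cancel₀ (pow_ne_zero 2 (sub_ne_zero.mpr hxy)) ?_
  linear_combination 2 * ((n + 1) * x - x ^ (n + 1)) * hSxy
    + 2 * ((n + 1) * y - y ^ (n + 1)) * hSyx + (x ^ n - y ^ n) * hcon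

theorem geom_sum₂_sq_add_mul_pow (hxy : x ^ 2 ≠ y ^ 2)
    (hcon : ((n : R) + 1) * (n + 2) * (x ^ 2 - y ^ 2) = 2 * (x ^ (n + 2) - y ^ (n + 2))) :
    2 * (∑ i ∈ range (n + 1), (x ^ 2) ^ i * (y ^ 2) ^ (n - i) + (x * y) ^ n)
      = (n + 1) * (n + 2) * (x ^ n + y ^ n) := by
  have hgeom := geom_sum₂_mul (x ^ 2) (y ^ 2) (n + 1)
  simp only [Nat.add_sub_cancel] at hgeom
  refine mul_left_cancel₀ (sub_ne_zero.mpr hxy) ?_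
  linear_combination 2 * hgeom - (x ^ n + y ^ n) * hcon

end Domain

theorem weightedGeomSum₂_combination_eq {K : Type*} [Field K] [CharZero K] {x y : K} {n : ℕ}
    (hxy : x ≠ y) (hxy' : x ≠ -y)
    (hcon : ((n : K) + 1) * (n + 2) * (x ^ 2 - y ^ 2) = 2 * (x ^ (n + 2) - y ^ (n + 2))) :
    weightedGeomSum₂ x y n * (x - x ^ (n + 1) / (n + 1))
        + weightedGeomSum₂ y x n * (y - y ^ (n + 1) / (n + 1))
      = n * ((n + 1) * (x * y) ^ n - ∑ i ∈ range (n + 1), (x ^ 2) ^ i * (y ^ 2) ^ (n - i))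
        / ((n + 1) * (n + 2)) := by
  have hsq : x ^ 2 ≠ y ^ 2 := fun h => (sq_eq_sq_iff_eq_or_eq_neg.mp h).elim hxy hxy'
  have hW := two_mul_weightedGeomSum₂_combination hxy hcon
  have hG := geom_sum₂_sq_add_mul_pow hsq hcon
  have h1 : (n : K) + 1 ≠ 0 := n.cast_add_one_ne_zero
  have h2 : (n : K) + 2 ≠ 0 := by exact_mod_cast (n + 1).succ_ne_zero
  field_simp
  linear_combination ((n + 2) / 2) * hW + (n / 2) * hG

/-- The key estimate (4.12): if `u > 0 > η`, `u ≠ -η`, and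
`u² - η² = (2/((n+1)(n+2)))(u^(n+2) - η^(n+2))`, then
`(∑_{k=1}^n k u^(n-k) η^(k-1))(u - u^(n+1)/(n+1))
  + (∑_{k=1}^n k η^(n-k) u^(k-1))(η - η^(n+1)/(n+1)) < 0`. -/
theorem abelian_inequality (n : ℕ) (hn : 0 < n) (u η : ℝ)
    (hu : 0 < u) (hη : η < 0) (hne' : u ≠ -η)
    (hcon : u ^ 2 - η ^ 2 =
      (2 / (((n : ℝ) + 1) * ((n : ℝ) + 2))) * (u ^ (n + 2) - η ^ (n + 2))) :
    (∑ k ∈ Finset.Icc 1 n, (k : ℝ) * u ^ (n - k) * η ^ (k - 1)) *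
        (u - u ^ (n + 1) / ((n : ℝ) + 1)) +
      (∑ k ∈ Finset.Icc 1 n, (k : ℝ) * η ^ (n - k) * u ^ (k - 1)) *
        (η - η ^ (n + 1) / ((n : ℝ) + 1)) < 0 := by
  have hne : u ≠ η := (hη.trans hu).ne'
  have hpow : u ^ n ≠ η ^ n := by
    rw [Ne, pow_eq_pow_iff_of_ne_zero hn.ne']
    rintro (h | ⟨h, -⟩)
    exacts [hne h, hne' h]
  have hcon' : ((n : ℝ) + 1) * (n + 2) * (u ^ 2 - η ^ 2) = 2 * (u ^ (n + 2) - η ^ (n + 2)) := by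
    rw [hcon]
    field_simp
  calc _ = _ := weightedGeomSum₂_combination_eq hne hne' hcon'
    _ < 0 := div_neg_of_neg_of_pos
      (mul_neg_of_pos_of_neg (by exact_mod_cast hn) (sub_neg.mpr (mul_pow_lt_geom_sum₂_sq hpow)))
      (by positivity)
end

section
/- Let n be a positive integer, W(u) = u²/2 - u^{n+2}/((n+1)(n+2)), d_n = n(n+1)^{2/n}/(2(n+2)). For h ∈ (0, d_n) let α(h) be the unique root of W(u) = h in (0, (n+1)^{1/n}) and β(h) the unique root of W(u) = h in (-(n+1)^{1/n}, 0) if n is even (in (n_*, 0) if n is odd, where n_* < 0 is the unique negative number with W(n_*) = d_n), and define B̃_n(h) = (∫_{β(h)}^{α(h)} uⁿ √(2(h - W(u))) du)/(∫_{β(h)}^{α(h)} √(2(h - W(u))) du). For u ∈ (0, (n+1)^{1/n}) let η(u) be the unique number with W(η(u)) = W(u) in the same negative interval as β. If the function T_n(u) = Σ_{k=0}^{n} u^{n-k} η(u)^{k} is strictly increasing on (0, (n+1)^{1/n}), then B̃_n is strictly increasing on (0, d_n). -/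
/-!
Writing `√(2 (h - W u)) = ∫_{W u}^h (2 (h - e))^(-1/2) de` and exchanging the order of
integration turns `B_k(h) = ∫_{β h}^{α h} u^k √(2 (h - W u)) du` into the Abel transform
`∫_0^h A_k(e) (2 (h - e))^(-1/2) de` of `A_k(e) = ∫_{β e}^{α e} u^k du`. Since `η (α e) = β e`,
the ratio `A_n / A_0 = T_n(α e) / (n + 1)` increases with `e`. The Abel transform preserves this:
with `K_i = (2 (h_i - e))^(-1/2)` and `D_i` the transform of `A_0` at `h_i`, the integrand
`(A_n(e) A_0(h₁) - A_0(e) A_n(h₁)) (K_2 D_1 - K_1 D_2)` is nonnegative because both factors change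
sign at `h₁`; for the second one this uses that `B_0` increases, the orbits being nested.
Integrating it gives `B_n(h₁) B_0(h₂) < B_n(h₂) B_0(h₁)`.
-/

open Set MeasureTheory

noncomputable def abelKernel (h e : ℝ) : ℝ := (√(2 * (h - e)))⁻¹

noncomputable def abelTransform (f : ℝ → ℝ) (h : ℝ) : ℝ := ∫ e in 0..h, f e * abelKernel h e

section AbelKernel

variable {h h₁ h₂ e : ℝ}

lemma abelKernel_nonneg (h e : ℝ) : 0 ≤ abelKernel h e :=
  inv_nonneg.2 (Real.sqrt_nonneg _)

lemma abelKernel_pos (he : e < h) : 0 < abelKernel h e :=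
  inv_pos.2 (Real.sqrt_pos.2 (by linarith))

lemma abelKernel_of_le (he : h ≤ e) : abelKernel h e = 0 := by
  rw [abelKernel, Real.sqrt_eq_zero'.2 (by linarith), inv_zero]

lemma abelKernel_le_abelKernel (he : e < h₁) (h12 : h₁ ≤ h₂) :
    abelKernel h₂ e ≤ abelKernel h₁ e :=
  inv_anti₀ (Real.sqrt_pos.2 (by linarith)) (Real.sqrt_le_sqrt (by linarith))

lemma measurable_abelKernel (h : ℝ) : Measurable (abelKernel h) := by
  unfold abelKernel; fun_prop

lemma hasDerivAt_neg_sqrt_two_mul_sub (he : e < h) :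
    HasDerivAt (fun x => -√(2 * (h - x))) (abelKernel h e) e := by
  have hpos : 2 * (h - e) ≠ 0 := by linarith
  refine ((((hasDerivAt_id e).const_sub h).const_mul 2).sqrt hpos).neg.congr_deriv ?_
  simp only [abelKernel, id]
  field_simp

lemma intervalIntegrable_abelKernel (h a b : ℝ) : IntervalIntegrable (abelKernel h) volume a b := by
  have to_h : ∀ c, IntervalIntegrable (abelKernel h) volume c h := by
    intro c
    rcases le_total c h with hc | hc
    · rw [intervalIntegrable_iff_integrableOn_Ioc_of_le hc]
      exact intervalIntegral.integrableOn_deriv_of_nonneg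
        (by fun_prop : Continuous fun x => -√(2 * (h - x))).continuousOn
        (fun x hx => hasDerivAt_neg_sqrt_two_mul_sub hx.2) (fun x _ => abelKernel_nonneg h x)
    · refine ((intervalIntegrable_iff_integrableOn_Ioc_of_le hc).2 ?_).symm
      exact integrableOn_zero.congr_fun (fun x hx => (abelKernel_of_le hx.1.le).symm)
        measurableSet_Ioc
  exact (to_h a).trans (to_h b).symm

lemma integral_abelKernel {w : ℝ} (hw : w ≤ h) : ∫ e in w..h, abelKernel h e = √(2 * (h - w)) := by
  rw [intervalIntegral.integral_eq_sub_of_hasDerivAt_of_le hw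
    (by fun_prop : Continuous fun x => -√(2 * (h - x))).continuousOn
    (fun x hx => hasDerivAt_neg_sqrt_two_mul_sub hx.2) (intervalIntegrable_abelKernel h w h)]
  simp

end AbelKernel

lemma intervalIntegrable_mul_abelKernel {f : ℝ → ℝ} {a b C : ℝ} (h : ℝ) (hab : a ≤ b)
    (hf : AEStronglyMeasurable f (volume.restrict (Ioc a b))) (hC : ∀ e ∈ Ioc a b, |f e| ≤ C) :
    IntervalIntegrable (fun e => f e * abelKernel h e) volume a b := by
  rw [intervalIntegrable_iff_integrableOn_Ioc_of_le hab]
  refine Integrable.bdd_mul (c := C) ((intervalIntegrable_abelKernel h a b).1) hf ?_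
  filter_upwards [ae_restrict_mem measurableSet_Ioc] with e he
  exact hC e he

/-- Fubini, using `√(2 (h - w)) = ∫_w^h abelKernel h`. -/
theorem setIntegral_mul_sqrt_eq_integral_abelKernel {W φ : ℝ → ℝ} {s : Set ℝ} {h C : ℝ}
    (hs : MeasurableSet s) (hs_fin : volume s ≠ ⊤) (hW : Measurable W) (hφ : Measurable φ)
    (hφC : ∀ u ∈ s, |φ u| ≤ C) (hW_nonneg : ∀ u ∈ s, 0 ≤ W u) (hW_le : ∀ u ∈ s, W u ≤ h)
    (hh : 0 ≤ h) :
    ∫ u in s, φ u * √(2 * (h - W u))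
      = ∫ e in 0..h, (∫ u in s ∩ {u | W u < e}, φ u) * abelKernel h e := by
  set F : ℝ → ℝ → ℝ := fun u e => if W u < e then φ u * abelKernel h e else 0 with hF
  have integral_F_right : ∀ u ∈ s, ∫ e in Ioc 0 h, F u e = φ u * √(2 * (h - W u)) := by
    intro u hu
    have hF_u : F u = (Ioi (W u)).indicator fun e => φ u * abelKernel h e := by
      ext e; simp [hF, indicator]
    rw [hF_u, setIntegral_indicator measurableSet_Ioi,
      Ioc_inter_Ioi, max_eq_right (hW_nonneg u hu), integral_const_mul,
      ← intervalIntegral.integral_of_le (hW_le u hu), integral_abelKernel (hW_le u hu)]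
  have integral_F_left :
      ∀ e, ∫ u in s, F u e = (∫ u in s ∩ {u | W u < e}, φ u) * abelKernel h e := by
    intro e
    have hF_e : (fun u => F u e) = fun u => {u | W u < e}.indicator φ u * abelKernel h e := by
      ext u; by_cases hu : W u < e <;> simp [hF, hu]
    rw [hF_e, integral_mul_const, setIntegral_indicator (measurableSet_lt hW measurable_const)]
  have hF_int : Integrable (Function.uncurry F)
      ((volume.restrict s).prod (volume.restrict (Ioc 0 h))) := by
    have : IsFiniteMeasure (volume.restrict s) := isFiniteMeasure_restrict.2 hs_fin
    have hbound : Integrable (fun p : ℝ × ℝ => C * abelKernel h p.2)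
        ((volume.restrict s).prod (volume.restrict (Ioc 0 h))) :=
      (integrable_const C).mul_prod (intervalIntegrable_abelKernel h 0 h).1
    refine hbound.mono' ?_ ?_
    · exact (Measurable.ite (measurableSet_lt (hW.comp measurable_fst) measurable_snd)
        ((hφ.comp measurable_fst).mul ((measurable_abelKernel h).comp measurable_snd))
        measurable_const).aestronglyMeasurable
    · filter_upwards [Measure.quasiMeasurePreserving_fst.ae (ae_restrict_mem hs)] with p hp
      simp only [Function.uncurry, hF]
      split_ifs
      · rw [norm_mul, Real.norm_eq_abs, Real.norm_eq_abs, abs_of_nonneg (abelKernel_nonneg _ _)]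
        exact mul_le_mul_of_nonneg_right (hφC _ hp) (abelKernel_nonneg _ _)
      · simpa using mul_nonneg ((abs_nonneg _).trans (hφC _ hp)) (abelKernel_nonneg h p.2)
  calc ∫ u in s, φ u * √(2 * (h - W u))
      = ∫ u in s, ∫ e in Ioc 0 h, F u e :=
        setIntegral_congr_fun hs fun u hu => (integral_F_right u hu).symm
    _ = ∫ e in Ioc 0 h, ∫ u in s, F u e := integral_integral_swap hF_int
    _ = ∫ e in 0..h, (∫ u in s ∩ {u | W u < e}, φ u) * abelKernel h e := by
        simp only [integral_F_left, intervalIntegral.integral_of_le hh]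

section AbelTransform

variable {f g : ℝ → ℝ} {h₁ h₂ : ℝ}

lemma abelTransform_eq_integral (h₁_nonneg : 0 ≤ h₁) (h12 : h₁ ≤ h₂)
    (hf : IntervalIntegrable (fun e => f e * abelKernel h₁ e) volume 0 h₂) :
    abelTransform f h₁ = ∫ e in 0..h₂, f e * abelKernel h₁ e := by
  have tail : ∫ e in h₁..h₂, f e * abelKernel h₁ e = 0 := by
    refine (intervalIntegral.integral_congr (g := fun _ => 0) fun e he => ?_).trans (by simp)
    rw [uIcc_of_le h12] at he
    simp [abelKernel_of_le he.1]
  rw [← intervalIntegral.integral_add_adjacent_intervals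
    (hf.mono_set (uIcc_subset_uIcc_left (Icc_subset_uIcc ⟨h₁_nonneg, h12⟩)))
    (hf.mono_set (uIcc_subset_uIcc_right (Icc_subset_uIcc ⟨h₁_nonneg, h12⟩))), tail, add_zero,
    abelTransform]

lemma abelTransform_pos (hh : 0 < h₁)
    (hg_int : IntervalIntegrable (fun e => g e * abelKernel h₁ e) volume 0 h₁)
    (hg : ∀ e ∈ Ioo 0 h₁, 0 < g e) : 0 < abelTransform g h₁ :=
  intervalIntegral.intervalIntegral_pos_of_pos_on hg_int
    (fun e he => mul_pos (hg e he) (abelKernel_pos he.2)) hh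

section Cross

variable (hf_int : ∀ h, IntervalIntegrable (fun e => f e * abelKernel h e) volume 0 h₂)
  (hg_int : ∀ h, IntervalIntegrable (fun e => g e * abelKernel h e) volume 0 h₂) (q c a b : ℝ)
include hf_int hg_int

lemma intervalIntegrable_cross :
    IntervalIntegrable (fun e => (f e * q - g e * c) *
      (abelKernel h₂ e * a - abelKernel h₁ e * b)) volume 0 h₂ := by
  convert (((hf_int h₂).const_mul (q * a)).sub ((hf_int h₁).const_mul (q * b))).sub
    (((hg_int h₂).const_mul (c * a)).sub ((hg_int h₁).const_mul (c * b))) using 1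
  ext e
  ring

lemma integral_cross (h₁_nonneg : 0 ≤ h₁) (h12 : h₁ ≤ h₂) :
    ∫ e in 0..h₂, (f e * q - g e * c) * (abelKernel h₂ e * a - abelKernel h₁ e * b)
      = q * (abelTransform f h₂ * a - abelTransform f h₁ * b)
        - c * (abelTransform g h₂ * a - abelTransform g h₁ * b) := by
  have hf₁ := (hf_int h₁).const_mul (q * b)
  have hf₂ := (hf_int h₂).const_mul (q * a)
  have hg₁ := (hg_int h₁).const_mul (c * b)
  have hg₂ := (hg_int h₂).const_mul (c * a)
  have hG : (fun e => (f e * q - g e * c) * (abelKernel h₂ e * a - abelKernel h₁ e * b))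
      = fun e => (q * a * (f e * abelKernel h₂ e) - q * b * (f e * abelKernel h₁ e))
        - (c * a * (g e * abelKernel h₂ e) - c * b * (g e * abelKernel h₁ e)) := by
    ext e; ring
  rw [hG, intervalIntegral.integral_sub (hf₂.sub hf₁) (hg₂.sub hg₁),
    intervalIntegral.integral_sub hf₂ hf₁, intervalIntegral.integral_sub hg₂ hg₁,
    abelTransform_eq_integral h₁_nonneg h12 (hf_int h₁),
    abelTransform_eq_integral h₁_nonneg h12 (hg_int h₁)]
  simp only [intervalIntegral.integral_const_mul, abelTransform]
  ring

end Cross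

lemma integral_pos_of_nonneg_of_pos_on_right {G : ℝ → ℝ} (h₁_nonneg : 0 ≤ h₁) (h12 : h₁ < h₂)
    (hG_int : IntervalIntegrable G volume 0 h₂) (hG_nonneg : ∀ e ∈ Ioo 0 h₂, 0 ≤ G e)
    (hG_pos : ∀ e ∈ Ioo h₁ h₂, 0 < G e) : 0 < ∫ e in 0..h₂, G e := by
  have hh₁ : h₁ ∈ uIcc 0 h₂ := Icc_subset_uIcc ⟨h₁_nonneg, h12.le⟩
  rw [← intervalIntegral.integral_add_adjacent_intervals
    (hG_int.mono_set (uIcc_subset_uIcc_left hh₁)) (hG_int.mono_set (uIcc_subset_uIcc_right hh₁))]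
  refine add_pos_of_nonneg_of_pos ?_ (intervalIntegral.intervalIntegral_pos_of_pos_on
    (hG_int.mono_set (uIcc_subset_uIcc_right hh₁)) hG_pos h12)
  rw [intervalIntegral.integral_of_le h₁_nonneg]
  exact setIntegral_nonneg measurableSet_Ioc fun e he => hG_nonneg e ⟨he.1, he.2.trans_lt h12⟩

theorem abelTransform_mul_lt_mul (h₁_pos : 0 < h₁) (h12 : h₁ < h₂)
    (hf_int : ∀ h, IntervalIntegrable (fun e => f e * abelKernel h e) volume 0 h₂)
    (hg_int : ∀ h, IntervalIntegrable (fun e => g e * abelKernel h e) volume 0 h₂)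
    (hg : ∀ e ∈ Ioo 0 h₂, 0 < g e) (hfg : StrictMonoOn (fun e => f e / g e) (Ioo 0 h₂))
    (hD : abelTransform g h₁ ≤ abelTransform g h₂) :
    abelTransform f h₁ * abelTransform g h₂ < abelTransform f h₂ * abelTransform g h₁ := by
  set D₁ := abelTransform g h₁
  set D₂ := abelTransform g h₂
  have hh₁ : h₁ ∈ Ioo 0 h₂ := ⟨h₁_pos, h12⟩
  have hD₁ : 0 < D₁ := abelTransform_pos h₁_pos ((hg_int h₁).mono_set
    (uIcc_subset_uIcc_left (Icc_subset_uIcc (Ioo_subset_Icc_self hh₁))))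
    fun e he => hg e ⟨he.1, he.2.trans h12⟩
  have hq : 0 < g h₁ := hg h₁ hh₁
  have cross_of_lt : ∀ e ∈ Ioo 0 h₂, e < h₁ → f e * g h₁ < g e * f h₁ := fun e he heh => by
    have := hfg he hh₁ heh
    rwa [div_lt_div_iff₀ (hg e he) hq, mul_comm (f h₁)] at this
  have cross_of_gt : ∀ e ∈ Ioo 0 h₂, h₁ < e → g e * f h₁ < f e * g h₁ := fun e he heh => by
    have := hfg hh₁ he heh
    rwa [div_lt_div_iff₀ hq (hg e he), mul_comm (f h₁)] at this
  -- both factors change sign at `h₁`; for the second one on `(0, h₁)` this is where `hD` enters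
  set G : ℝ → ℝ := fun e =>
    (f e * g h₁ - g e * f h₁) * (abelKernel h₂ e * D₁ - abelKernel h₁ e * D₂)
  have hG_pos : ∀ e ∈ Ioo h₁ h₂, 0 < G e := fun e he => by
    refine mul_pos (sub_pos.2 (cross_of_gt e ⟨h₁_pos.trans he.1, he.2⟩ he.1)) ?_
    rw [abelKernel_of_le he.1.le, zero_mul, sub_zero]
    exact mul_pos (abelKernel_pos he.2) hD₁
  have hG_nonneg : ∀ e ∈ Ioo 0 h₂, 0 ≤ G e := by
    intro e he
    rcases lt_trichotomy e h₁ with heh | rfl | heh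
    · refine mul_nonneg_of_nonpos_of_nonpos (sub_nonpos.2 (cross_of_lt e he heh).le) ?_
      have hK := abelKernel_le_abelKernel heh h12.le
      nlinarith [abelKernel_nonneg h₁ e]
    · simp [G, mul_comm]
    · exact (hG_pos e ⟨heh, he.2⟩).le
  have hG := integral_pos_of_nonneg_of_pos_on_right h₁_pos.le h12
    (intervalIntegrable_cross hf_int hg_int _ _ _ _) hG_nonneg hG_pos
  rw [integral_cross hf_int hg_int _ _ _ _ h₁_pos.le h12.le, mul_comm D₂ D₁, sub_self,
    mul_zero, sub_zero] at hG
  linarith [(mul_pos_iff_of_pos_left hq).1 hG]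

end AbelTransform

/-- `∫_{β e}^{α e} u ^ k du`. -/
noncomputable def moment (α β : ℝ → ℝ) (k : ℕ) (e : ℝ) : ℝ :=
  (α e ^ (k + 1) - β e ^ (k + 1)) / (k + 1)

lemma abs_moment_le {α β : ℝ → ℝ} {k : ℕ} {e M : ℝ} (hα : |α e| ≤ M) (hβ : |β e| ≤ M) :
    |moment α β k e| ≤ 2 * M ^ (k + 1) := by
  have hk : (1 : ℝ) ≤ k + 1 := by simp
  calc |moment α β k e| ≤ |α e ^ (k + 1) - β e ^ (k + 1)| := by
        rw [moment, abs_div, abs_of_pos (show (0 : ℝ) < k + 1 by positivity)]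
        exact div_le_self (abs_nonneg _) hk
    _ ≤ |α e| ^ (k + 1) + |β e| ^ (k + 1) := by
        rw [← abs_pow, ← abs_pow]
        exact abs_sub _ _
    _ ≤ 2 * M ^ (k + 1) := by
        have := pow_le_pow_left₀ (abs_nonneg _) hα (k + 1)
        have := pow_le_pow_left₀ (abs_nonneg _) hβ (k + 1)
        linarith

structure IsPotentialWell (W : ℝ → ℝ) (l r d : ℝ) (α β : ℝ → ℝ) : Prop where
  continuous : Continuous W
  map_zero : W 0 = 0
  strictAntiOn : StrictAntiOn W (Icc l 0)
  strictMonoOn : StrictMonoOn W (Icc 0 r)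
  left_mem : ∀ h ∈ Ioo 0 d, β h ∈ Ioo l 0
  right_mem : ∀ h ∈ Ioo 0 d, α h ∈ Ioo 0 r
  map_left : ∀ h ∈ Ioo 0 d, W (β h) = h
  map_right : ∀ h ∈ Ioo 0 d, W (α h) = h

namespace IsPotentialWell

variable {W : ℝ → ℝ} {l r d : ℝ} {α β : ℝ → ℝ} (hW : IsPotentialWell W l r d α β)
include hW

lemma lt_iff {u e : ℝ} (hu : u ∈ Icc l r) (he : e ∈ Ioo 0 d) :
    W u < e ↔ u ∈ Ioo (β e) (α e) := by
  obtain ⟨hβl, hβ0⟩ := hW.left_mem e he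
  obtain ⟨hα0, hαr⟩ := hW.right_mem e he
  rcases le_total u 0 with hu0 | hu0
  · conv_lhs => rw [← hW.map_left e he]
    rw [hW.strictAntiOn.lt_iff_gt ⟨hu.1, hu0⟩ ⟨hβl.le, hβ0.le⟩]
    exact ⟨fun h => ⟨h, hu0.trans_lt hα0⟩, And.left⟩
  · conv_lhs => rw [← hW.map_right e he]
    rw [hW.strictMonoOn.lt_iff_lt ⟨hu0, hu.2⟩ ⟨hα0.le, hαr.le⟩]
    exact ⟨fun h => ⟨hβ0.trans_le hu0, h⟩, And.right⟩

lemma nonneg {u : ℝ} (hu : u ∈ Icc l r) : 0 ≤ W u := by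
  rw [← hW.map_zero]
  rcases le_total u 0 with hu0 | hu0
  · exact hW.strictAntiOn.antitoneOn ⟨hu.1, hu0⟩ ⟨hu.1.trans hu0, le_rfl⟩ hu0
  · exact hW.strictMonoOn.monotoneOn ⟨le_rfl, hu0.trans hu.2⟩ ⟨hu0, hu.2⟩ hu0

lemma left_lt_right {h : ℝ} (hh : h ∈ Ioo 0 d) : β h < α h :=
  (hW.left_mem h hh).2.trans (hW.right_mem h hh).1

lemma Icc_subset {h : ℝ} (hh : h ∈ Ioo 0 d) : Icc (β h) (α h) ⊆ Icc l r :=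
  Icc_subset_Icc (hW.left_mem h hh).1.le (hW.right_mem h hh).2.le

lemma strictMonoOn_right : StrictMonoOn α (Ioo 0 d) := fun e he f hf hef => by
  have hαe := hW.Icc_subset he (right_mem_Icc.2 (hW.left_lt_right he).le)
  exact ((hW.lt_iff hαe hf).1 (by rwa [hW.map_right e he])).2

lemma strictAntiOn_left : StrictAntiOn β (Ioo 0 d) := fun e he f hf hef => by
  have hβe := hW.Icc_subset he (left_mem_Icc.2 (hW.left_lt_right he).le)
  exact ((hW.lt_iff hβe hf).1 (by rwa [hW.map_left e he])).1

lemma Ioo_inter_setOf_lt {h e : ℝ} (hh : h ∈ Ioo 0 d) (he : e ∈ Ioc 0 h) :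
    Ioo (β h) (α h) ∩ {u | W u < e} = Ioo (β e) (α e) := by
  have he' : e ∈ Ioo 0 d := ⟨he.1, he.2.trans_lt hh.2⟩
  have hsub : Ioo (β e) (α e) ⊆ Ioo (β h) (α h) :=
    Ioo_subset_Ioo (hW.strictAntiOn_left.antitoneOn he' hh he.2)
      (hW.strictMonoOn_right.monotoneOn he' hh he.2)
  ext u
  refine ⟨fun ⟨hu, hWu⟩ => (hW.lt_iff (hW.Icc_subset hh (Ioo_subset_Icc_self hu)) he').1 hWu,
    fun hu => ⟨hsub hu, (hW.lt_iff (hW.Icc_subset he' (Ioo_subset_Icc_self hu)) he').2 hu⟩⟩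

lemma abelianIntegral_eq {h : ℝ} (hh : h ∈ Ioo 0 d) (k : ℕ) :
    ∫ u in β h..α h, u ^ k * √(2 * (h - W u)) = abelTransform (moment α β k) h := by
  have hIcc : ∀ u ∈ Ioo (β h) (α h), u ∈ Icc l r :=
    fun u hu => hW.Icc_subset hh (Ioo_subset_Icc_self hu)
  rw [intervalIntegral.integral_of_le (hW.left_lt_right hh).le, integral_Ioc_eq_integral_Ioo,
    setIntegral_mul_sqrt_eq_integral_abelKernel (C := max |l| |r| ^ k) measurableSet_Ioo
      measure_Ioo_lt_top.ne hW.continuous.measurable (by fun_prop)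
      (fun u hu => by
        rw [abs_pow]
        exact pow_le_pow_left₀ (abs_nonneg u) (abs_le_max_abs_abs (hIcc u hu).1 (hIcc u hu).2) k)
      (fun u hu => hW.nonneg (hIcc u hu)) (fun u hu => ((hW.lt_iff (hIcc u hu) hh).2 hu).le)
      hh.1.le]
  refine intervalIntegral.integral_congr_ae (Filter.Eventually.of_forall fun e he => ?_)
  rw [uIoc_of_le hh.1.le] at he
  rw [hW.Ioo_inter_setOf_lt hh he, ← integral_Ioc_eq_integral_Ioo,
    ← intervalIntegral.integral_of_le (hW.left_lt_right ⟨he.1, he.2.trans_lt hh.2⟩).le,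
    integral_pow, moment]

lemma moment_zero_pos {e : ℝ} (he : e ∈ Ioo 0 d) : 0 < moment α β 0 e := by
  simpa [moment] using hW.left_lt_right he

lemma intervalIntegrable_moment_mul_abelKernel {b : ℝ} (hb : b ∈ Ioo 0 d) (k : ℕ) (h : ℝ) :
    IntervalIntegrable (fun e => moment α β k e * abelKernel h e) volume 0 b := by
  have hsub : Ioc 0 b ⊆ Ioo 0 d := Ioc_subset_Ioo_right hb.2
  have hα := aemeasurable_restrict_of_monotoneOn (μ := volume) measurableSet_Ioc
    (hW.strictMonoOn_right.monotoneOn.mono hsub)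
  have hβ := aemeasurable_restrict_of_antitoneOn (μ := volume) measurableSet_Ioc
    (hW.strictAntiOn_left.antitoneOn.mono hsub)
  refine intervalIntegrable_mul_abelKernel (C := 2 * max |l| |r| ^ (k + 1)) h hb.1.le
    (((hα.pow_const _).sub (hβ.pow_const _)).div_const _).aestronglyMeasurable fun e he => ?_
  have hIcc := hW.Icc_subset (hsub he)
  have hαe := hIcc (right_mem_Icc.2 (hW.left_lt_right (hsub he)).le)
  have hβe := hIcc (left_mem_Icc.2 (hW.left_lt_right (hsub he)).le)
  exact abs_moment_le (abs_le_max_abs_abs hαe.1 hαe.2) (abs_le_max_abs_abs hβe.1 hβe.2)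

lemma abelianIntegral_zero_le {h₁ h₂ : ℝ} (hh₁ : h₁ ∈ Ioo 0 d) (hh₂ : h₂ ∈ Ioo 0 d)
    (h12 : h₁ ≤ h₂) :
    ∫ u in β h₁..α h₁, √(2 * (h₁ - W u)) ≤ ∫ u in β h₂..α h₂, √(2 * (h₂ - W u)) := by
  have hint : ∀ h a b, IntervalIntegrable (fun u => √(2 * (h - W u))) volume a b :=
    fun h a b => (by have := hW.continuous; fun_prop : Continuous _).intervalIntegrable a b
  have hβ := hW.strictAntiOn_left.antitoneOn hh₁ hh₂ h12
  have hα := hW.strictMonoOn_right.monotoneOn hh₁ hh₂ h12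
  calc ∫ u in β h₁..α h₁, √(2 * (h₁ - W u))
      ≤ ∫ u in β h₁..α h₁, √(2 * (h₂ - W u)) :=
        intervalIntegral.integral_mono_on (hW.left_lt_right hh₁).le (hint _ _ _) (hint _ _ _)
          fun u _ => Real.sqrt_le_sqrt (by linarith)
    _ ≤ ∫ u in β h₂..α h₂, √(2 * (h₂ - W u)) := by
        rw [← intervalIntegral.integral_add_adjacent_intervals (hint h₂ (β h₂) (β h₁))
            (hint h₂ (β h₁) (α h₂)),
          ← intervalIntegral.integral_add_adjacent_intervals (hint h₂ (β h₁) (α h₁))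
            (hint h₂ (α h₁) (α h₂))]
        have left : 0 ≤ ∫ u in β h₂..β h₁, √(2 * (h₂ - W u)) :=
          intervalIntegral.integral_nonneg hβ fun u _ => Real.sqrt_nonneg _
        have right : 0 ≤ ∫ u in α h₁..α h₂, √(2 * (h₂ - W u)) :=
          intervalIntegral.integral_nonneg hα fun u _ => Real.sqrt_nonneg _
        linarith

theorem strictMonoOn_abelianIntegral_div (n : ℕ)
    (hratio : StrictMonoOn (fun e => moment α β n e / moment α β 0 e) (Ioo 0 d)) :
    StrictMonoOn (fun h => (∫ u in β h..α h, u ^ n * √(2 * (h - W u))) /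
      ∫ u in β h..α h, √(2 * (h - W u))) (Ioo 0 d) := by
  have hB₀ : ∀ h ∈ Ioo 0 d, ∫ u in β h..α h, √(2 * (h - W u)) = abelTransform (moment α β 0) h :=
    fun h hh => by simpa using hW.abelianIntegral_eq hh 0
  have hD_pos : ∀ h ∈ Ioo 0 d, 0 < abelTransform (moment α β 0) h := fun h hh =>
    abelTransform_pos hh.1 (hW.intervalIntegrable_moment_mul_abelKernel hh 0 h)
      fun e he => hW.moment_zero_pos ⟨he.1, he.2.trans hh.2⟩
  intro h₁ hh₁ h₂ hh₂ h12
  have hsub : Ioo 0 h₂ ⊆ Ioo 0 d := Ioo_subset_Ioo_right hh₂.2.le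
  dsimp only
  rw [hW.abelianIntegral_eq hh₁, hW.abelianIntegral_eq hh₂, hB₀ h₁ hh₁, hB₀ h₂ hh₂,
    div_lt_div_iff₀ (hD_pos h₁ hh₁) (hD_pos h₂ hh₂)]
  refine abelTransform_mul_lt_mul hh₁.1 h12 (hW.intervalIntegrable_moment_mul_abelKernel hh₂ n)
    (hW.intervalIntegrable_moment_mul_abelKernel hh₂ 0) (fun e he => hW.moment_zero_pos (hsub he))
    (hratio.mono hsub) ?_
  rw [← hB₀ h₁ hh₁, ← hB₀ h₂ hh₂]
  exact hW.abelianIntegral_zero_le hh₁ hh₂ h12.le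

end IsPotentialWell

lemma sum_pow_mul_pow_mul_sub (x y : ℝ) (n : ℕ) :
    (∑ k ∈ Finset.range (n + 1), x ^ (n - k) * y ^ k) * (x - y) = x ^ (n + 1) - y ^ (n + 1) := by
  rw [← geom_sum₂_mul, geom_sum₂_comm]
  simp [mul_comm]

lemma moment_div_moment_zero {α β : ℝ → ℝ} {e : ℝ} (n : ℕ) (he : β e < α e) :
    moment α β n e / moment α β 0 e
      = (∑ k ∈ Finset.range (n + 1), α e ^ (n - k) * β e ^ k) / (n + 1) := by
  have : α e - β e ≠ 0 := (sub_pos.2 he).ne'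
  rw [moment, moment, ← sum_pow_mul_pow_mul_sub]
  simp only [Nat.cast_zero, zero_add, pow_one, div_one]
  field_simp

noncomputable def potential (n : ℕ) (u : ℝ) : ℝ :=
  u ^ 2 / 2 - u ^ (n + 2) / (((n : ℝ) + 1) * ((n : ℝ) + 2))

section Potential

variable {n : ℕ} {r : ℝ}

lemma continuous_potential (n : ℕ) : Continuous (potential n) := by
  unfold potential; fun_prop

lemma hasDerivAt_potential (n : ℕ) (u : ℝ) :
    HasDerivAt (potential n) (u * (1 - u ^ n / (n + 1))) u := by
  have h2 := (hasDerivAt_pow 2 u).div_const 2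
  have hn2 := (hasDerivAt_pow (n + 2) u).div_const (((n : ℝ) + 1) * ((n : ℝ) + 2))
  refine (h2.sub hn2).congr_deriv ?_
  push_cast
  field_simp
  ring

lemma one_sub_pow_div_pos {u : ℝ} (hu : u ^ n < n + 1) : 0 < 1 - u ^ n / (n + 1) := by
  rw [sub_pos, div_lt_one (by positivity)]
  exact hu

lemma potential_strictMonoOn (hn : n ≠ 0) (hr : r ^ n = n + 1) :
    StrictMonoOn (potential n) (Icc 0 r) := by
  refine strictMonoOn_of_deriv_pos (convex_Icc 0 r) (continuous_potential n).continuousOn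
    fun u hu => ?_
  rw [interior_Icc] at hu
  rw [(hasDerivAt_potential n u).deriv]
  exact mul_pos hu.1 (one_sub_pow_div_pos (hr ▸ pow_lt_pow_left₀ hu.2 hu.1.le hn))

lemma potential_strictAntiOn (hn : n ≠ 0) (hr : r ^ n = n + 1) :
    StrictAntiOn (potential n) (Icc (-r) 0) := by
  refine strictAntiOn_of_deriv_neg (convex_Icc (-r) 0) (continuous_potential n).continuousOn
    fun u hu => ?_
  rw [interior_Icc] at hu
  rw [(hasDerivAt_potential n u).deriv]
  have hu_abs : |u| < r := abs_lt.2 ⟨hu.1, hu.2.trans (neg_lt_zero.1 (hu.1.trans hu.2))⟩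
  refine mul_neg_of_neg_of_pos hu.2 (one_sub_pow_div_pos ?_)
  calc u ^ n ≤ |u| ^ n := (le_abs_self _).trans (abs_pow u n).le
    _ < r ^ n := pow_lt_pow_left₀ hu_abs (abs_nonneg u) hn
    _ = n + 1 := hr

lemma potential_strictAntiOn_of_odd (hn : Odd n) : StrictAntiOn (potential n) (Iic 0) := by
  refine strictAntiOn_of_deriv_neg (convex_Iic 0) (continuous_potential n).continuousOn
    fun u hu => ?_
  rw [interior_Iic] at hu
  rw [(hasDerivAt_potential n u).deriv]
  exact mul_neg_of_neg_of_pos hu (one_sub_pow_div_pos ((hn.pow_neg hu).trans (by positivity)))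

end Potential

theorem monotonicity_criterion_general (n : ℕ) (hn : 0 < n)
    (W : ℝ → ℝ)
    (hW : ∀ u : ℝ, W u = u ^ 2 / 2 - u ^ (n + 2) / (((n : ℝ) + 1) * ((n : ℝ) + 2)))
    (r : ℝ) (hr : r = ((n : ℝ) + 1) ^ ((1 : ℝ) / n))
    (d : ℝ)
    (nstar : ℝ)
    (α β : ℝ → ℝ)
    (hα : ∀ h ∈ Set.Ioo (0 : ℝ) d, α h ∈ Set.Ioo 0 r ∧ W (α h) = h)
    (hβW : ∀ h ∈ Set.Ioo (0 : ℝ) d, W (β h) = h)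
    (hβeven : Even n → ∀ h ∈ Set.Ioo (0 : ℝ) d, β h ∈ Set.Ioo (-r) 0)
    (hβodd : Odd n → ∀ h ∈ Set.Ioo (0 : ℝ) d, β h ∈ Set.Ioo nstar 0)
    (η : ℝ → ℝ)
    (hηW : ∀ u ∈ Set.Ioo (0 : ℝ) r, W (η u) = W u)
    (hηeven : Even n → ∀ u ∈ Set.Ioo (0 : ℝ) r, η u ∈ Set.Ioo (-r) 0)
    (hηodd : Odd n → ∀ u ∈ Set.Ioo (0 : ℝ) r, η u ∈ Set.Ioo nstar 0)
    (hT : StrictMonoOn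
      (fun u => ∑ k ∈ Finset.range (n + 1), u ^ (n - k) * (η u) ^ k)
      (Set.Ioo (0 : ℝ) r))
    (B : ℝ → ℝ)
    (hB : ∀ h : ℝ, B h =
      (∫ u in (β h)..(α h), u ^ n * Real.sqrt (2 * (h - W u))) /
      (∫ u in (β h)..(α h), Real.sqrt (2 * (h - W u)))) :
    StrictMonoOn B (Set.Ioo (0 : ℝ) d) := by
  obtain rfl : W = potential n := funext hW
  have hrn : r ^ n = n + 1 := by
    rw [hr, one_div]
    exact Real.rpow_inv_natCast_pow (by positivity) hn.ne'
  obtain ⟨l, hl, hβl, hηl⟩ : ∃ l, StrictAntiOn (potential n) (Icc l 0) ∧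
      (∀ h ∈ Ioo 0 d, β h ∈ Ioo l 0) ∧ ∀ u ∈ Ioo 0 r, η u ∈ Ioo l 0 := by
    rcases n.even_or_odd with hn_even | hn_odd
    · exact ⟨-r, potential_strictAntiOn hn.ne' hrn, hβeven hn_even, hηeven hn_even⟩
    · exact ⟨nstar, (potential_strictAntiOn_of_odd hn_odd).mono Icc_subset_Iic_self,
        hβodd hn_odd, hηodd hn_odd⟩
  have hwell : IsPotentialWell (potential n) l r d α β :=
    ⟨continuous_potential n, by simp [potential], hl, potential_strictMonoOn hn.ne' hrn, hβl,
      fun h hh => (hα h hh).1, hβW, fun h hh => (hα h hh).2⟩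
  have hη : ∀ e ∈ Ioo 0 d, η (α e) = β e := fun e he =>
    hl.injOn (Ioo_subset_Icc_self (hηl _ (hα e he).1)) (Ioo_subset_Icc_self (hβl e he))
      (by rw [hηW _ (hα e he).1, (hα e he).2, hβW e he])
  have hratio : StrictMonoOn (fun e => moment α β n e / moment α β 0 e) (Ioo 0 d) := by
    intro e he f hf hef
    simp only [moment_div_moment_zero n (hwell.left_lt_right he),
      moment_div_moment_zero n (hwell.left_lt_right hf), ← hη e he, ← hη f hf]
    exact div_lt_div_of_pos_right (hT (hα e he).1 (hα f hf).1 (hwell.strictMonoOn_right he hf hef))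
      (by positivity)
  exact (hwell.strictMonoOn_abelianIntegral_div n hratio).congr fun h _ => (hB h).symm

/-- The monotonicity criterion (Lemma 4.2) specialized to
`W(u) = u²/2 - u^(n+2)/((n+1)(n+2))`: if `T_n(u) = ∑_{k=0}^n u^(n-k) η(u)^k` is
strictly increasing on `(0, (n+1)^(1/n))`, then the ratio of Abelian integrals
`B̃_n` is strictly increasing on `(0, d_n)`. -/
theorem monotonicity_criterion (n : ℕ) (hn : 0 < n)
    (W : ℝ → ℝ)
    (hW : ∀ u : ℝ, W u = u ^ 2 / 2 - u ^ (n + 2) / (((n : ℝ) + 1) * ((n : ℝ) + 2)))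
    (r : ℝ) (hr : r = ((n : ℝ) + 1) ^ ((1 : ℝ) / n))
    (d : ℝ) (hd : d = (n : ℝ) * ((n : ℝ) + 1) ^ ((2 : ℝ) / n) / (2 * ((n : ℝ) + 2)))
    (nstar : ℝ) (hodd : Odd n → nstar < 0 ∧ W nstar = d)
    (α β : ℝ → ℝ)
    (hα : ∀ h ∈ Set.Ioo (0 : ℝ) d, α h ∈ Set.Ioo 0 r ∧ W (α h) = h)
    (hβW : ∀ h ∈ Set.Ioo (0 : ℝ) d, W (β h) = h)
    (hβeven : Even n → ∀ h ∈ Set.Ioo (0 : ℝ) d, β h ∈ Set.Ioo (-r) 0)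
    (hβodd : Odd n → ∀ h ∈ Set.Ioo (0 : ℝ) d, β h ∈ Set.Ioo nstar 0)
    (η : ℝ → ℝ)
    (hηW : ∀ u ∈ Set.Ioo (0 : ℝ) r, W (η u) = W u)
    (hηeven : Even n → ∀ u ∈ Set.Ioo (0 : ℝ) r, η u ∈ Set.Ioo (-r) 0)
    (hηodd : Odd n → ∀ u ∈ Set.Ioo (0 : ℝ) r, η u ∈ Set.Ioo nstar 0)
    (hT : StrictMonoOn
      (fun u => ∑ k ∈ Finset.range (n + 1), u ^ (n - k) * (η u) ^ k)
      (Set.Ioo (0 : ℝ) r))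
    (B : ℝ → ℝ)
    (hB : ∀ h : ℝ, B h =
      (∫ u in (β h)..(α h), u ^ n * Real.sqrt (2 * (h - W u))) /
      (∫ u in (β h)..(α h), Real.sqrt (2 * (h - W u)))) :
    StrictMonoOn B (Set.Ioo (0 : ℝ) d) :=
  monotonicity_criterion_general n hn W hW r hr d nstar α β hα hβW hβeven hβodd η hηW hηeven hηodd
    hT B hB
end

section
/- Let W(u) = u²/2 - u⁴/12 and for h ∈ (0, 3/4) let α(h) ∈ (0, √3) be the unique root of W(u) = h in (0, √3), and define B̃₂(h) = (∫_{-α(h)}^{α(h)} u² √(2(h - W(u))) du)/(∫_{-α(h)}^{α(h)} √(2(h - W(u))) du). Then B̃₂(h) → 3/5 as h → (3/4)⁻, and consequently c₀(h) = 1/(1 - B̃₂(h)) → 5/2 as h → (3/4)⁻. -/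
/-!
On `[-√3, √3]` one has `W ≤ h` exactly on `[-α(h), α(h)]`, and `Real.sqrt` vanishes on negative
reals, so both Abelian integrals may be taken over the fixed interval `[-√3, √3]`. They are then
continuous in `h` up to the saddle level `3/4`, where `√(2 (3/4 - W u)) = (3 - u²)/√6` is
polynomial, and the limit ratio is `(∫ u²(3 - u²)) / (∫ (3 - u²)) = (12√3/5) / (4√3) = 3/5`.
-/

open Real Set Filter Topology intervalIntegral

noncomputable section

def W₂ (u : ℝ) : ℝ := u ^ 2 / 2 - u ^ 4 / 12

/-- Half of `∮_{Γ_h} uⁿ v du`, integrated over the fixed interval `[-√3, √3]`. -/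
def abelianIntegral (n : ℕ) (h : ℝ) : ℝ :=
  ∫ u in -√3..√3, u ^ n * √(2 * (h - W₂ u))

theorem W₂_sub_W₂ (u a : ℝ) : W₂ u - W₂ a = (u ^ 2 - a ^ 2) * (6 - u ^ 2 - a ^ 2) / 12 := by
  unfold W₂; ring

theorem W₂_le_W₂_of_sq_le {a u : ℝ} (hau : a ^ 2 ≤ u ^ 2) (hu : u ^ 2 ≤ 6 - a ^ 2) :
    W₂ a ≤ W₂ u := by
  have := W₂_sub_W₂ u a
  nlinarith [mul_nonneg (sub_nonneg.2 hau) (sub_nonneg.2 hu)]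

theorem integral_eq_of_eqOn_zero {f : ℝ → ℝ} {a b c d : ℝ} (hf : Continuous f)
    (hab : a ≤ b) (hcd : c ≤ d) (hfab : EqOn f 0 (Icc a b)) (hfcd : EqOn f 0 (Icc c d)) :
    ∫ x in b..c, f x = ∫ x in a..d, f x := by
  have hint (x y : ℝ) : IntervalIntegrable f MeasureTheory.volume x y := hf.intervalIntegrable x y
  have hleft : ∫ x in a..b, f x = 0 := by
    rw [integral_congr (uIcc_of_le hab ▸ hfab)]; simp
  have hright : ∫ x in c..d, f x = 0 := by
    rw [integral_congr (uIcc_of_le hcd ▸ hfcd)]; simp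
  rw [← integral_add_adjacent_intervals (hint a c) (hint c d),
    ← integral_add_adjacent_intervals (hint a b) (hint b c), hleft, hright, zero_add, add_zero]

theorem integral_eq_abelianIntegral (n : ℕ) {a : ℝ} (ha : a ∈ Icc 0 √3) :
    ∫ u in -a..a, u ^ n * √(2 * (W₂ a - W₂ u)) = abelianIntegral n (W₂ a) := by
  have hs : √3 ^ 2 = 3 := sq_sqrt (by norm_num)
  have ha3 : a ^ 2 ≤ 3 := by nlinarith [ha.1, ha.2]
  have hvanish : ∀ u, a ≤ |u| → |u| ≤ √3 → u ^ n * √(2 * (W₂ a - W₂ u)) = 0 := by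
    intro u hau hus
    have hau2 : a ^ 2 ≤ u ^ 2 := by nlinarith [sq_abs u, ha.1]
    have hus2 : u ^ 2 ≤ 3 := by nlinarith [sq_abs u, abs_nonneg u]
    rw [sqrt_eq_zero'.2 (by linarith [W₂_le_W₂_of_sq_le hau2 (by linarith)]), mul_zero]
  refine integral_eq_of_eqOn_zero (by unfold W₂; fun_prop) (by linarith [ha.2]) ha.2 ?_ ?_
  · rintro u ⟨hu₁, hu₂⟩
    exact hvanish u (by rw [abs_of_nonpos (by linarith [ha.1])]; linarith)
      (by rw [abs_le]; constructor <;> linarith [ha.1])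
  · rintro u ⟨hu₁, hu₂⟩
    exact hvanish u (by rw [abs_of_nonneg (by linarith [ha.1])]; linarith)
      (by rw [abs_of_nonneg (by linarith [ha.1])]; linarith)

theorem continuous_abelianIntegral (n : ℕ) : Continuous (abelianIntegral n) :=
  continuous_parametric_intervalIntegral_of_continuous' (by unfold W₂; fun_prop) _ _

theorem sqrt_two_mul_saddle_sub_W₂ {u : ℝ} (hu : u ^ 2 ≤ 3) :
    √(2 * (3 / 4 - W₂ u)) = (3 - u ^ 2) / √6 := by
  have h6 : √6 ^ 2 = 6 := sq_sqrt (by norm_num)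
  have hsq : 2 * (3 / 4 - W₂ u) = ((3 - u ^ 2) / √6) ^ 2 := by
    rw [div_pow, h6]; unfold W₂; ring
  rw [hsq, sqrt_sq (div_nonneg (by linarith) (sqrt_nonneg 6))]

theorem abelianIntegral_saddle (n : ℕ) :
    abelianIntegral n (3 / 4) = (∫ u in -√3..√3, u ^ n * (3 - u ^ 2)) / √6 := by
  rw [abelianIntegral, ← integral_div]
  refine integral_congr fun u hu => ?_
  have hs : √3 ^ 2 = 3 := sq_sqrt (by norm_num)
  rw [uIcc_of_le (by linarith [sqrt_nonneg 3])] at hu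
  rw [sqrt_two_mul_saddle_sub_W₂ (by nlinarith [hu.1, hu.2]), mul_div_assoc]

theorem abelianIntegral_two_div_zero_saddle :
    abelianIntegral 2 (3 / 4) / abelianIntegral 0 (3 / 4) = 3 / 5 := by
  have hs : √3 ^ 2 = 3 := sq_sqrt (by norm_num)
  have h3 : √3 ^ 3 = 3 * √3 := by rw [pow_succ, hs]
  have h5 : √3 ^ 5 = 9 * √3 := by rw [show 5 = 2 * 2 + 1 by rfl, pow_succ, pow_mul, hs]; ring
  have hint (m : ℕ) : IntervalIntegrable (fun u : ℝ => u ^ m) MeasureTheory.volume (-√3) √3 :=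
    (continuous_pow m).intervalIntegrable _ _
  have hnum : ∫ u in -√3..√3, u ^ 2 * (3 - u ^ 2) = 12 * √3 / 5 := by
    simp_rw [mul_sub, ← pow_add, mul_comm _ (3 : ℝ)]
    rw [integral_sub ((hint 2).const_mul 3) (hint 4), integral_const_mul, integral_pow,
      integral_pow]
    simp only [Nat.reduceAdd, Odd.neg_pow (by decide : Odd 3), Odd.neg_pow (by decide : Odd 5),
      h3, h5]
    ring
  have hden : ∫ u in -√3..√3, u ^ 0 * (3 - u ^ 2) = 4 * √3 := by
    simp only [pow_zero, one_mul]
    rw [integral_sub intervalIntegrable_const (hint 2), integral_const, integral_pow]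
    simp only [Nat.reduceAdd, Odd.neg_pow (by decide : Odd 3), h3, smul_eq_mul]
    ring
  rw [abelianIntegral_saddle, abelianIntegral_saddle, hnum, hden]
  field_simp
  ring

end

/-- For `n = 2` (`W(u) = u²/2 - u⁴/12`), the ratio of Abelian
integrals `B̃₂(h)` tends to `3/5` as `h → (3/4)⁻`, hence the limit wave speed
`c₀(h) = 1/(1 - B̃₂(h))` tends to `5/2`. -/
theorem B2_limit_at_saddle (W : ℝ → ℝ)
    (hW : ∀ u : ℝ, W u = u ^ 2 / 2 - u ^ 4 / 12)
    (α : ℝ → ℝ)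
    (hα : ∀ h ∈ Set.Ioo (0 : ℝ) (3 / 4),
      α h ∈ Set.Ioo 0 (Real.sqrt 3) ∧ W (α h) = h)
    (B : ℝ → ℝ)
    (hB : ∀ h : ℝ, B h =
      (∫ u in (-α h)..(α h), u ^ 2 * Real.sqrt (2 * (h - W u))) /
      (∫ u in (-α h)..(α h), Real.sqrt (2 * (h - W u)))) :
    Filter.Tendsto B (nhdsWithin (3 / 4) (Set.Iio (3 / 4))) (nhds (3 / 5)) ∧
    Filter.Tendsto (fun h => 1 / (1 - B h))
      (nhdsWithin (3 / 4) (Set.Iio (3 / 4))) (nhds (5 / 2)) := by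
  obtain rfl : W = W₂ := funext hW
  have hB_eq : B =ᶠ[𝓝[<] (3 / 4)] fun h => abelianIntegral 2 h / abelianIntegral 0 h := by
    filter_upwards [Ioo_mem_nhdsLT (by norm_num : (0 : ℝ) < 3 / 4)] with h hh
    obtain ⟨hαh, hWα⟩ := hα h hh
    have hI (n : ℕ) := integral_eq_abelianIntegral n (Ioo_subset_Icc_self hαh)
    rw [hWα] at hI
    rw [hB h, ← hI 2, ← hI 0]
    simp only [pow_zero, one_mul]
  have hratio : Tendsto (fun h => abelianIntegral 2 h / abelianIntegral 0 h) (𝓝[<] (3 / 4))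
      (𝓝 (3 / 5)) := by
    have hden : abelianIntegral 0 (3 / 4) ≠ 0 := fun h0 => by
      have h := abelianIntegral_two_div_zero_saddle
      norm_num [h0] at h
    rw [← abelianIntegral_two_div_zero_saddle]
    exact (((continuous_abelianIntegral 2).tendsto _).div
      ((continuous_abelianIntegral 0).tendsto _) hden).mono_left nhdsWithin_le_nhds
  have hBlim := hratio.congr' hB_eq.symm
  refine ⟨hBlim, ?_⟩
  rw [show (5 / 2 : ℝ) = 1 / (1 - 3 / 5) by norm_num]
  exact tendsto_const_nhds.div (tendsto_const_nhds.sub hBlim) (by norm_num)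
end

section
/- The following two definite integrals hold: ∫₀^{5^{1/4}} √(-u² + u⁶/15 + 2√5/3) du = -(√15/4) · ln(2 - √3) and ∫₀^{5^{1/4}} u⁴ √(-u² + u⁶/15 + 2√5/3) du = -(15√5/16) · (2 + √3 · ln 2 - 2√3 · ln(1 + √3)). -/
/-!
At the heteroclinic level the radicand factors: with `a = 5^{1/4}`, so that `a⁴ = 5`,
`-u² + u⁶/15 + 2a²/3 = (a² - u²)² (u² + 2a²) / 15`. On `[0, a]` both integrands are
therefore `p(u) √(u² + 2a²) / √15` with `p` a polynomial, and `p(u) √(u² + c)` has the elementary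
antiderivative `q(u) √(u² + c) + k log (u + √(u² + c))` as soon as
`q'(u) (u² + c) + q(u) u + k = p(u) (u² + c)`, which determines `q` and `k`.
At the turning point `√(a² + 2a²) = √3 a`, and the logarithm contributes
`log ((1 + √3) / √2) = -log (2 - √3) / 2`.
-/

open Real intervalIntegral Set

section SqrtSqAdd

variable {c : ℝ}

theorem hasDerivAt_sqrt_sq_add (hc : 0 < c) (u : ℝ) :
    HasDerivAt (fun x => √(x ^ 2 + c)) (u / √(u ^ 2 + c)) u := by
  have hR : 0 < √(u ^ 2 + c) := by positivity
  convert ((hasDerivAt_pow 2 u).add_const c).sqrt (by positivity) using 1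
  field_simp
  ring

theorem add_sqrt_sq_add_pos (hc : 0 < c) (u : ℝ) : 0 < u + √(u ^ 2 + c) := by
  have : |u| < √(u ^ 2 + c) := by
    rw [← sqrt_sq_eq_abs]
    exact sqrt_lt_sqrt (sq_nonneg u) (by linarith)
  linarith [neg_abs_le u]

theorem hasDerivAt_log_add_sqrt_sq_add (hc : 0 < c) (u : ℝ) :
    HasDerivAt (fun x => log (x + √(x ^ 2 + c))) (1 / √(u ^ 2 + c)) u := by
  have hR : 0 < √(u ^ 2 + c) := by positivity
  have hS := add_sqrt_sq_add_pos hc u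
  refine (((hasDerivAt_id u).fun_add (hasDerivAt_sqrt_sq_add hc u)).log hS.ne').congr_deriv ?_
  simp only [id]
  field_simp
  ring

theorem hasDerivAt_mul_sqrt_sq_add_add_log (hc : 0 < c) {q : ℝ → ℝ} {q' p k u : ℝ}
    (hq : HasDerivAt q q' u) (h : q' * (u ^ 2 + c) + q u * u + k = p * (u ^ 2 + c)) :
    HasDerivAt (fun x => q x * √(x ^ 2 + c) + k * log (x + √(x ^ 2 + c)))
      (p * √(u ^ 2 + c)) u := by
  have hR : 0 < √(u ^ 2 + c) := by positivity
  have hR2 : √(u ^ 2 + c) ^ 2 = u ^ 2 + c := sq_sqrt (by positivity)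
  refine ((hq.fun_mul (hasDerivAt_sqrt_sq_add hc u)).fun_add
    ((hasDerivAt_log_add_sqrt_sq_add hc u).const_mul k)).congr_deriv ?_
  field_simp
  rw [hR2]
  linear_combination h

theorem integral_mul_sqrt_sq_add (hc : 0 < c) {q q' p : ℝ → ℝ} {k : ℝ}
    (hq : ∀ x, HasDerivAt q (q' x) x) (hp : Continuous p)
    (h : ∀ x, q' x * (x ^ 2 + c) + q x * x + k = p x * (x ^ 2 + c)) (a b : ℝ) :
    ∫ x in a..b, p x * √(x ^ 2 + c) =
      (q b * √(b ^ 2 + c) + k * log (b + √(b ^ 2 + c))) -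
        (q a * √(a ^ 2 + c) + k * log (a + √(a ^ 2 + c))) :=
  integral_eq_sub_of_hasDerivAt
    (fun x _ => hasDerivAt_mul_sqrt_sq_add_add_log hc (hq x) (h x))
    ((hp.mul (by fun_prop)).intervalIntegrable a b)

end SqrtSqAdd

theorem log_two_sub_sqrt_three : log (2 - √3) = log 2 - 2 * log (1 + √3) := by
  have h3 : √3 ^ 2 = 3 := sq_sqrt (by norm_num)
  have : 2 - √3 = 2 / (1 + √3) ^ 2 := by
    rw [eq_div_iff (by positivity)]
    linear_combination (-√3) * h3
  rw [this, log_div (by norm_num) (by positivity), log_pow]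
  push_cast
  ring

section Heteroclinic

variable {a : ℝ}

theorem sqrt_sq_add_two_mul_sq (ha : 0 < a) : √(a ^ 2 + 2 * a ^ 2) = √3 * a := by
  rw [show a ^ 2 + 2 * a ^ 2 = 3 * a ^ 2 by ring, sqrt_mul (by norm_num), sqrt_sq ha.le]

theorem log_add_sqrt_sub_log_sqrt (ha : 0 < a) :
    log (a + √(a ^ 2 + 2 * a ^ 2)) - log (0 + √(0 ^ 2 + 2 * a ^ 2)) = -log (2 - √3) / 2 := by
  rw [sqrt_sq_add_two_mul_sq ha, log_two_sub_sqrt_three,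
    show a + √3 * a = (1 + √3) * a by ring, log_mul (by positivity) ha.ne',
    show (0 : ℝ) + √(0 ^ 2 + 2 * a ^ 2) = √2 * a by
      rw [zero_add, zero_pow two_ne_zero, zero_add, sqrt_mul zero_le_two, sqrt_sq ha.le],
    log_mul (by positivity) ha.ne', log_sqrt zero_le_two]
  ring

theorem integral_sq_sub_sq_mul_sqrt (ha : 0 < a) :
    ∫ u in (0 : ℝ)..a, (a ^ 2 - u ^ 2) * √(u ^ 2 + 2 * a ^ 2) =
      -3 / 4 * a ^ 4 * log (2 - √3) := by
  have hq (u : ℝ) : HasDerivAt (fun x => x * (a ^ 2 - x ^ 2) / 4) ((a ^ 2 - 3 * u ^ 2) / 4) u :=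
    (((hasDerivAt_id' u).fun_mul ((hasDerivAt_pow 2 u).const_sub _)).div_const 4).congr_deriv
      (by ring)
  rw [integral_mul_sqrt_sq_add (by positivity) hq (by fun_prop) (k := 3 / 2 * a ^ 4)
    (fun u => by ring)]
  linear_combination 3 / 2 * a ^ 4 * log_add_sqrt_sub_log_sqrt ha

theorem integral_pow_four_mul_sq_sub_sq_mul_sqrt (ha : 0 < a) :
    ∫ u in (0 : ℝ)..a, u ^ 4 * (a ^ 2 - u ^ 2) * √(u ^ 2 + 2 * a ^ 2) =
      -a ^ 8 / 16 * (6 * √3 + 9 * log (2 - √3)) := by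
  have hq (u : ℝ) :
      HasDerivAt (fun x => -1 / 8 * x ^ 7 + a ^ 2 / 8 * x ^ 5 + 3 * a ^ 4 / 16 * x ^ 3
          - 9 * a ^ 6 / 16 * x)
        (-7 / 8 * u ^ 6 + 5 * a ^ 2 / 8 * u ^ 4 + 9 * a ^ 4 / 16 * u ^ 2 - 9 * a ^ 6 / 16) u :=
    ((((hasDerivAt_pow 7 u).const_mul _).fun_add ((hasDerivAt_pow 5 u).const_mul _)).fun_add
      ((hasDerivAt_pow 3 u).const_mul _)).fun_sub ((hasDerivAt_id' u).const_mul _)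
      |>.congr_deriv (by ring)
  rw [integral_mul_sqrt_sq_add (by positivity) hq (by fun_prop) (k := 9 / 8 * a ^ 8)
    (fun u => by ring)]
  linear_combination
    9 / 8 * a ^ 8 * log_add_sqrt_sub_log_sqrt ha - 3 / 8 * a ^ 7 * sqrt_sq_add_two_mul_sq ha

end Heteroclinic

theorem pow_four_eq_of_sq_eq_sqrt {a x : ℝ} (hx : 0 ≤ x) (ha : a ^ 2 = √x) : a ^ 4 = x := by
  rw [show a ^ 4 = (a ^ 2) ^ 2 by ring, ha, sq_sqrt hx]

theorem sqrt_eq_sq_sub_sq_mul_sqrt {a u : ℝ} (ha : a ^ 2 = √5) (hu : u ^ 2 ≤ a ^ 2) :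
    √(-u ^ 2 + u ^ 6 / 15 + 2 * √5 / 3) = (a ^ 2 - u ^ 2) * √(u ^ 2 + 2 * a ^ 2) / √15 := by
  have hfactor : -u ^ 2 + u ^ 6 / 15 + 2 * a ^ 2 / 3 =
      (a ^ 2 - u ^ 2) ^ 2 * (u ^ 2 + 2 * a ^ 2) / 15 := by
    linear_combination (u ^ 2 - 2 * a ^ 2 / 3) / 5 * pow_four_eq_of_sq_eq_sqrt (by norm_num) ha
  rw [← ha, hfactor, sqrt_div' _ (by norm_num), sqrt_mul (sq_nonneg _), sqrt_sq (by linarith)]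

/-- The definite integrals for the case `n = 4` at the heteroclinic
level: `∫₀^{5^(1/4)} √(-u² + u⁶/15 + 2√5/3) du = -(√15/4) ln(2 - √3)` and
`∫₀^{5^(1/4)} u⁴ √(-u² + u⁶/15 + 2√5/3) du
  = -(15√5/16)(2 + √3 ln 2 - 2√3 ln(1 + √3))`. -/
theorem integrals_n_four :
    (∫ u in (0 : ℝ)..(5 : ℝ) ^ ((1 : ℝ) / 4),
        Real.sqrt (-u ^ 2 + u ^ 6 / 15 + 2 * Real.sqrt 5 / 3)) =
      -(Real.sqrt 15 / 4) * Real.log (2 - Real.sqrt 3) ∧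
    (∫ u in (0 : ℝ)..(5 : ℝ) ^ ((1 : ℝ) / 4),
        u ^ 4 * Real.sqrt (-u ^ 2 + u ^ 6 / 15 + 2 * Real.sqrt 5 / 3)) =
      -(15 * Real.sqrt 5 / 16) *
        (2 + Real.sqrt 3 * Real.log 2 - 2 * Real.sqrt 3 * Real.log (1 + Real.sqrt 3)) := by
  set a : ℝ := (5 : ℝ) ^ ((1 : ℝ) / 4)
  have ha : 0 < a := by positivity
  have ha2 : a ^ 2 = √5 := by
    rw [sqrt_eq_rpow, ← rpow_natCast, ← rpow_mul (by norm_num)]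
    norm_num
  have ha4 : a ^ 4 = 5 := pow_four_eq_of_sq_eq_sqrt (by norm_num) ha2
  have hrad : EqOn (fun u => √(-u ^ 2 + u ^ 6 / 15 + 2 * √5 / 3))
      (fun u => (a ^ 2 - u ^ 2) * √(u ^ 2 + 2 * a ^ 2) / √15) (uIcc 0 a) := by
    intro u hu
    rw [uIcc_of_le ha.le] at hu
    exact sqrt_eq_sq_sub_sq_mul_sqrt ha2 (pow_le_pow_left₀ hu.1 hu.2 2)
  have h3 : √3 ^ 2 = 3 := sq_sqrt (by norm_num)
  have h5 : √5 ^ 2 = 5 := sq_sqrt (by norm_num)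
  have h15 : √15 = √3 * √5 := by rw [← sqrt_mul (by norm_num)]; norm_num
  constructor
  · rw [integral_congr hrad, integral_div, integral_sq_sub_sq_mul_sqrt ha, ha4, h15]
    field_simp
    rw [h3, h5]
    ring
  · rw [integral_congr (g := fun u => u ^ 4 * (a ^ 2 - u ^ 2) * √(u ^ 2 + 2 * a ^ 2) / √15)
      (fun u hu => by simp only [hrad hu]; ring), integral_div,
      integral_pow_four_mul_sq_sub_sq_mul_sqrt ha, show a ^ 8 = (a ^ 4) ^ 2 by ring, ha4, h15,
      log_two_sub_sqrt_three]
    field_simp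
    rw [h5]
    linear_combination 75 * (log 2 - 2 * log (1 + √3)) * h3
end
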